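/- Let P be a set of n ≥ d + 1 points in ℝ^d, let α = ⌈n/(d+1)⌉, and let C be the center of P (assumed nonempty). Then either C has dimension d, or there exist an integer s with 1 ≤ s ≤ d and a convex polyhedron I of dimension d − s such that C ⊆ I and I contains at least n − (s+1)(α − 1) points of P. -/

import Mathlib

/-- A centerpoint of a finite set `P` of points in `ℝ^d`: every closed halfspace
containing `c` contains at least `⌈|P|/(d+1)⌉` points of `P`. -/
def IsCenterpoint {d : ℕ} (P : Finset (EuclideanSpace ℝ (Fin d)))
    (c : EuclideanSpace ℝ (Fin d)) : Prop :=
  ∀ (f : EuclideanSpace ℝ (Fin d) →ₗ[ℝ] ℝ) (a : ℝ), f ≠ 0 → a ≤ f c →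
    ⌈(P.card : ℚ) / (d + 1)⌉₊ ≤ (P.filter fun q => a ≤ f q).card

/-- A convex polyhedron in `ℝ^d`: an intersection of finitely many closed halfspaces. -/
def IsConvexPolyhedron {d : ℕ} (S : Set (EuclideanSpace ℝ (Fin d))) : Prop :=
  ∃ (m : ℕ) (f : Fin m → (EuclideanSpace ℝ (Fin d) →ₗ[ℝ] ℝ)) (a : Fin m → ℝ),
    (∀ i, f i ≠ 0) ∧ S = ⋂ i, {x | a i ≤ f i x}

/-- The dimension of a subset of `ℝ^d`: the rank of the direction of its affine span. -/
noncomputable def setDim {d : ℕ} (S : Set (EuclideanSpace ℝ (Fin d))) : ℕ :=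
  Module.finrank ℝ (affineSpan ℝ S).direction

/-!
Let `h u` be the `α`-th largest of the values `⟪u, q⟫`, `q ∈ P`. A point `c` is a centerpoint iff
`⟪u, c⟫ ≤ h u` for every unit vector `u`, so the center is the Wulff shape of the continuous
function `h`. Fix `x` in its relative interior. Every unit normal `u` that is active at `x`
(`⟪u, x⟫ = h u`) is orthogonal to the affine span of the center. If `0` were not a convex
combination of active normals, separating `0` from them would give a direction `v`, orthogonal to
that span, along which `x` can be pushed (by compactness of the sphere) without leaving the center;
so unless the center is full-dimensional, Carathéodory gives affinely independent active normals
`z₀, …, z_r` with a vanishing positive combination, where `r ≤ s := dim span zᵢ`. The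
halfspaces `⟪zᵢ, ·⟫ ≤ h zᵢ` then meet in a `(d - s)`-flat containing the center, and each of them
misses at most `α - 1` points of `P`.
-/

open Finset RealInnerProductSpace

section KthLargest

variable {X : Type*} (P : Finset X) (k : ℕ)

/-- Values are counted with multiplicity; this is a junk value unless `0 < k ≤ #P`. -/
noncomputable def kthLargest (f : X → ℝ) : ℝ :=
  sSup {t | k ≤ #{x ∈ P | t ≤ f x}}

variable {P k}

theorem isClosed_setOf_le_card_filter_le (f : X → ℝ) :
    IsClosed {t | k ≤ #{x ∈ P | t ≤ f x}} := by
  have hS : {t | k ≤ #{x ∈ P | t ≤ f x}} = ⋃ Q ∈ P.powersetCard k, ⋂ x ∈ Q, Set.Iic (f x) := by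
    ext t
    simp only [Set.mem_ofPred_eq, Set.mem_iUnion, Set.mem_iInter, Set.mem_Iic, mem_powersetCard,
      exists_prop]
    constructor
    · intro ht
      obtain ⟨Q, hQ, hQk⟩ := exists_subset_card_eq ht
      exact ⟨Q, ⟨hQ.trans (filter_subset _ _), hQk⟩, fun x hx => (mem_filter.1 (hQ hx)).2⟩
    · rintro ⟨Q, ⟨hQP, hQk⟩, hQ⟩
      exact hQk.ge.trans (card_le_card fun x hx => mem_filter.2 ⟨hQP hx, hQ x hx⟩)
  rw [hS]
  exact isClosed_biUnion_finset fun Q _ => isClosed_biInter fun x _ => isClosed_Iic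

variable {f g : X → ℝ}

theorem le_kthLargest_iff (hk : 0 < k) (hkP : k ≤ #P) {t : ℝ} :
    t ≤ kthLargest P k f ↔ k ≤ #{x ∈ P | t ≤ f x} := by
  set S := {t | k ≤ #{x ∈ P | t ≤ f x}}
  have hP : P.Nonempty := card_pos.1 (hk.trans_le hkP)
  have hanti : ∀ {t t'}, t ≤ t' → t' ∈ S → t ∈ S := fun htt' ht' =>
    ht'.trans (card_le_card (monotone_filter_right P fun _ _ hx => htt'.trans hx))
  have hbdd : BddAbove S := ⟨P.sup' hP f, fun t ht => by
    obtain ⟨x, hx⟩ := card_pos.1 (hk.trans_le ht)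
    rw [mem_filter] at hx
    exact hx.2.trans (le_sup' f hx.1)⟩
  have hne : S.Nonempty := ⟨P.inf' hP f, by
    show k ≤ _
    rwa [filter_true_of_mem fun x hx => inf'_le f hx]⟩
  have hmax := (isClosed_setOf_le_card_filter_le f).csSup_mem hne hbdd
  exact ⟨fun ht => hanti ht hmax, fun ht => le_csSup hbdd ht⟩

theorem card_filter_kthLargest_lt (hk : 0 < k) : #{x ∈ P | kthLargest P k f < f x} < k := by
  by_contra! hcon
  obtain ⟨x, hx, hmin⟩ := exists_min_image _ f (card_pos.1 (hk.trans_le hcon))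
  have hle : f x ≤ kthLargest P k f := by
    refine (le_kthLargest_iff hk (hcon.trans (card_filter_le _ _))).2 (hcon.trans ?_)
    exact card_le_card (monotone_filter_right P fun y hy hlt => hmin y (mem_filter.2 ⟨hy, hlt⟩))
  exact (mem_filter.1 hx).2.not_ge hle

theorem card_le_card_filter_forall_le_kthLargest_add {ι : Type*} [Fintype ι] (f : ι → X → ℝ)
    (hk : 0 < k) :
    #P ≤ #{x ∈ P | ∀ i, f i x ≤ kthLargest P k (f i)} + Fintype.card ι * (k - 1) := by
  classical
  calc #P = #{x ∈ P | ∀ i, f i x ≤ kthLargest P k (f i)} +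
        #{x ∈ P | ¬∀ i, f i x ≤ kthLargest P k (f i)} := (card_filter_add_card_filter_not _).symm
    _ ≤ #{x ∈ P | ∀ i, f i x ≤ kthLargest P k (f i)} +
        ∑ i, #{x ∈ P | kthLargest P k (f i) < f i x} := by
      gcongr
      refine (card_le_card fun x hx => ?_).trans card_biUnion_le
      simp only [mem_filter, not_forall, not_le, mem_biUnion, mem_univ, true_and] at hx ⊢
      obtain ⟨hxP, i, hi⟩ := hx
      exact ⟨i, hxP, hi⟩
    _ ≤ #{x ∈ P | ∀ i, f i x ≤ kthLargest P k (f i)} + ∑ _i : ι, (k - 1) := by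
      gcongr with i
      exact Nat.le_sub_one_of_lt (card_filter_kthLargest_lt hk)
    _ = _ := by simp

theorem kthLargest_le_add (hk : 0 < k) (hkP : k ≤ #P) {c : ℝ} (h : ∀ x ∈ P, f x ≤ g x + c) :
    kthLargest P k f ≤ kthLargest P k g + c := by
  rw [← sub_le_iff_le_add, le_kthLargest_iff hk hkP]
  refine ((le_kthLargest_iff (f := f) hk hkP).1 le_rfl).trans (card_le_card ?_)
  exact monotone_filter_right P fun x hx hfx => by linarith [h x hx]

end KthLargest

theorem continuous_kthLargest_inner {E : Type*} [NormedAddCommGroup E] [InnerProductSpace ℝ E]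
    {P : Finset E} {k : ℕ} (hk : 0 < k) (hkP : k ≤ #P) :
    Continuous fun u : E => kthLargest P k (⟪u, ·⟫) := by
  set R := ∑ q ∈ P, ‖q‖
  refine (LipschitzWith.of_le_add_mul' R fun u u' =>
    kthLargest_le_add hk hkP fun q hq => ?_).continuous
  have hq : ‖q‖ ≤ R := single_le_sum (fun p _ => norm_nonneg p) hq
  calc ⟪u, q⟫ = ⟪u', q⟫ + ⟪u - u', q⟫ := by rw [inner_sub_left]; ring
    _ ≤ ⟪u', q⟫ + ‖u - u'‖ * ‖q‖ := by gcongr; exact real_inner_le_norm _ _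
    _ ≤ ⟪u', q⟫ + R * dist u u' := by rw [dist_eq_norm, mul_comm]; gcongr

section NormedSpace

variable {E : Type*} [NormedAddCommGroup E] [NormedSpace ℝ E]

theorem IsCompact.convexHull [FiniteDimensional ℝ E] {s : Set E} (hs : IsCompact s) :
    IsCompact (convexHull ℝ s) := by
  have hcont : ∀ m, Continuous fun p : (Fin m → ℝ) × (Fin m → E) => ∑ i, p.1 i • p.2 i :=
    fun m => by fun_prop
  suffices _root_.convexHull ℝ s = ⋃ m : Fin (Module.finrank ℝ E + 2),
      (fun p : (Fin m → ℝ) × (Fin m → E) => ∑ i, p.1 i • p.2 i) ''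
        (stdSimplex ℝ (Fin m) ×ˢ Set.univ.pi fun _ => s) by
    rw [this]
    exact isCompact_iUnion fun m =>
      ((isCompact_stdSimplex ℝ _).prod (isCompact_univ_pi fun _ => hs)).image (hcont m)
  apply subset_antisymm
  · intro x hx
    obtain ⟨ι, _, z, w, hzs, hind, hw, hw1, rfl⟩ := eq_pos_convex_span_of_mem_convexHull hx
    have hcard : Fintype.card ι < Module.finrank ℝ E + 2 :=
      (hind.card_le_finrank_succ.trans (Nat.succ_le_succ (Submodule.finrank_le _))).trans_lt
        (Nat.lt_succ_self _)
    let e := Fintype.equivFin ι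
    refine Set.mem_iUnion.2 ⟨⟨_, hcard⟩, (w ∘ e.symm, z ∘ e.symm), ⟨⟨fun i => (hw _).le, ?_⟩,
      fun i _ => hzs ⟨_, rfl⟩⟩, ?_⟩
    · simpa [hw1] using e.symm.sum_comp w
    · exact e.symm.sum_comp fun i => w i • z i
  · simp only [Set.iUnion_subset_iff, Set.image_subset_iff]
    rintro m ⟨w, z⟩ ⟨hw, hz⟩
    exact (convex_convexHull ℝ s).sum_mem (fun i _ => hw.1 i) hw.2
      fun i _ => subset_convexHull ℝ s (hz i trivial)

theorem exists_pos_add_smul_mem_of_mem_intrinsicInterior {s : Set E} {x v : E}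
    (hx : x ∈ intrinsicInterior ℝ s) (hv : v ∈ (affineSpan ℝ s).direction) :
    ∃ ε > (0 : ℝ), x + ε • v ∈ s := by
  obtain ⟨y, hy, rfl⟩ := hx
  let ψ : ℝ → affineSpan ℝ s := fun t =>
    ⟨t • v +ᵥ (y : E), AffineSubspace.vadd_mem_of_mem_direction (Submodule.smul_mem _ t hv) y.2⟩
  have hψ : Continuous ψ := by fun_prop
  have hψ0 : ψ 0 = y := by ext; simp [ψ]
  have hev : ∀ᶠ t in nhdsWithin (0 : ℝ) (Set.Ioi 0), ψ t ∈ interior (Subtype.val ⁻¹' s) :=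
    nhdsWithin_le_nhds (hψ.continuousAt.preimage_mem_nhds (hψ0 ▸ isOpen_interior.mem_nhds hy))
  obtain ⟨ε, hε, hεs⟩ := (hev.and self_mem_nhdsWithin).exists
  exact ⟨ε, hεs, by simpa [ψ, add_comm] using interior_subset hε⟩

end NormedSpace

section InnerProductSpace

variable {E : Type*} [NormedAddCommGroup E] [InnerProductSpace ℝ E]

theorem mem_orthogonal_direction_of_forall_inner_le {s : Set E} {x u : E}
    (hx : x ∈ intrinsicInterior ℝ s) (hu : ∀ y ∈ s, ⟪u, y⟫ ≤ ⟪u, x⟫) :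
    u ∈ (affineSpan ℝ s).directionᗮ := by
  have hnonpos : ∀ v ∈ (affineSpan ℝ s).direction, ⟪u, v⟫ ≤ 0 := fun v hv => by
    obtain ⟨ε, hε, hmem⟩ := exists_pos_add_smul_mem_of_mem_intrinsicInterior hx hv
    have := hu _ hmem
    rw [inner_add_right, real_inner_smul_right] at this
    nlinarith
  refine fun v hv => le_antisymm ?_ ?_
  · rw [real_inner_comm]
    exact hnonpos v hv
  · have := hnonpos (-v) (neg_mem hv)
    rw [inner_neg_right] at this
    rw [real_inner_comm]
    linarith

theorem exists_mem_ne_zero_forall_inner_neg [FiniteDimensional ℝ E] {W : Submodule ℝ E}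
    (hW : W ≠ ⊥) {N : Set E} (hNW : N ⊆ W) (hN : IsCompact N) (h0 : (0 : E) ∉ convexHull ℝ N) :
    ∃ v ∈ W, v ≠ 0 ∧ ∀ u ∈ N, ⟪u, v⟫ < 0 := by
  rcases N.eq_empty_or_nonempty with rfl | ⟨u₀, hu₀⟩
  · obtain ⟨v, hv, hv0⟩ := W.exists_mem_ne_zero_of_ne_bot hW
    exact ⟨v, hv, hv0, by simp⟩
  obtain ⟨f, t, hf, ht⟩ :=
    geometric_hahn_banach_closed_point (convex_convexHull ℝ N) hN.convexHull.isClosed h0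
  set w := (InnerProductSpace.toDual ℝ E).symm f
  have hneg : ∀ u ∈ N, ⟪u, W.starProjection w⟫ < 0 := fun u hu => by
    have hperp := W.starProjection_inner_eq_zero w u (hNW hu)
    rw [inner_sub_left, InnerProductSpace.toDual_symm_apply] at hperp
    rw [real_inner_comm]
    linarith [hf u (subset_convexHull ℝ N hu), show f 0 = 0 from map_zero f]
  refine ⟨_, W.starProjection_apply_mem w, fun hv => ?_, hneg⟩
  simpa [hv] using hneg u₀ hu₀

theorem AffineIndependent.card_le_finrank_span_add_one {ι : Type*} [Fintype ι] {z : ι → E}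
    (hz : AffineIndependent ℝ z) :
    Fintype.card ι ≤ Module.finrank ℝ (Submodule.span ℝ (Set.range z)) + 1 := by
  have := FiniteDimensional.span_of_finite ℝ (Set.finite_range z)
  refine hz.card_le_finrank_succ.trans (Nat.succ_le_succ (Submodule.finrank_mono ?_))
  rw [vectorSpan_def, Submodule.span_le]
  rintro _ ⟨a, ha, b, hb, rfl⟩
  exact sub_mem (Submodule.subset_span ha) (Submodule.subset_span hb)

theorem iInter_inner_le_eq_mk' {ι : Type*} [Fintype ι] {z : ι → E} {w : ι → ℝ}
    (hw : ∀ i, 0 < w i) (hsum : ∑ i, w i • z i = 0) (x : E) :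
    ⋂ i, {y | ⟪z i, y⟫ ≤ ⟪z i, x⟫} =
      (AffineSubspace.mk' x (Submodule.span ℝ (Set.range z))ᗮ : Set E) := by
  ext y
  simp only [Set.mem_iInter, Set.mem_ofPred_eq, SetLike.mem_coe, AffineSubspace.mem_mk',
    vsub_eq_sub]
  constructor
  · intro hy
    have hnonpos : ∀ i ∈ univ, w i * ⟪z i, y - x⟫ ≤ 0 := fun i _ =>
      mul_nonpos_of_nonneg_of_nonpos (hw i).le (by rw [inner_sub_right]; linarith [hy i])
    have hsum0 : ∑ i, w i * ⟪z i, y - x⟫ = 0 := by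
      simp_rw [← real_inner_smul_left, ← sum_inner, hsum, inner_zero_left]
    have horth : ∀ i, ⟪z i, y - x⟫ = 0 := fun i =>
      (mul_eq_zero.1 ((sum_eq_zero_iff_of_nonpos hnonpos).1 hsum0 i (mem_univ i))).resolve_left
        (hw i).ne'
    have hker : Submodule.span ℝ (Set.range z) ≤ LinearMap.ker (innerₗ E (y - x)) := by
      rw [Submodule.span_le]
      rintro _ ⟨i, rfl⟩
      exact (real_inner_comm _ _).trans (horth i)
    exact fun u hu => (real_inner_comm _ _).trans (hker hu)
  · intro hy i
    have := Submodule.inner_right_of_mem_orthogonal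
      (Submodule.subset_span (Set.mem_range_self i)) hy
    rw [inner_sub_right] at this
    linarith

def wulffShape (h : E → ℝ) : Set E :=
  {x | ∀ u, ‖u‖ = 1 → ⟪u, x⟫ ≤ h u}

def activeNormals (h : E → ℝ) (x : E) : Set E :=
  {u | ‖u‖ = 1 ∧ ⟪u, x⟫ = h u}

variable {h : E → ℝ} {x : E}

theorem convex_wulffShape (h : E → ℝ) : Convex ℝ (wulffShape h) := by
  simp only [wulffShape, Set.ofPred_forall]
  exact convex_iInter fun u => convex_iInter fun _ =>
    convex_halfSpace_le (innerₗ E u).isLinear (h u)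

theorem isCompact_activeNormals [FiniteDimensional ℝ E] (hh : Continuous h) (x : E) :
    IsCompact (activeNormals h x) :=
  (isCompact_sphere (0 : E) 1).of_isClosed_subset
    ((isClosed_eq continuous_norm continuous_const).inter
      (isClosed_eq (continuous_id.inner continuous_const) hh))
    fun _ hu => mem_sphere_zero_iff_norm.2 hu.1

theorem exists_pos_add_smul_mem_wulffShape [FiniteDimensional ℝ E] (hh : Continuous h)
    (hx : x ∈ wulffShape h) {v : E} (hv : ∀ u ∈ activeNormals h x, ⟪u, v⟫ < 0) :
    ∃ ε > (0 : ℝ), x + ε • v ∈ wulffShape h := by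
  set K := Metric.sphere (0 : E) 1 ∩ {u | 0 ≤ ⟪u, v⟫}
  have hK : IsCompact K := (isCompact_sphere 0 1).inter_right
    (isClosed_le continuous_const (continuous_id.inner continuous_const))
  obtain ⟨δ, hδ, hδK⟩ := hK.exists_forall_le' (f := fun u => h u - ⟪u, x⟫) (a := 0)
    (hh.sub (continuous_id.inner continuous_const)).continuousOn fun u ⟨hu1, hu2⟩ => by
      rw [mem_sphere_zero_iff_norm] at hu1
      refine sub_pos.2 ((hx u hu1).lt_of_ne fun heq => ?_)
      exact (hv u ⟨hu1, heq⟩).not_ge hu2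
  refine ⟨δ / (‖v‖ + 1), by positivity, fun u hu => ?_⟩
  rw [inner_add_right, real_inner_smul_right]
  rcases le_or_gt 0 ⟪u, v⟫ with hpos | hneg
  · have huv : ⟪u, v⟫ ≤ ‖v‖ + 1 := by
      have := real_inner_le_norm u v
      rw [hu, one_mul] at this
      linarith
    have := hδK u ⟨mem_sphere_zero_iff_norm.2 hu, hpos⟩
    calc ⟪u, x⟫ + δ / (‖v‖ + 1) * ⟪u, v⟫ ≤ ⟪u, x⟫ + δ / (‖v‖ + 1) * (‖v‖ + 1) := by gcongr
      _ ≤ h u := by rw [div_mul_cancel₀ _ (by positivity)]; linarith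
  · have := hx u hu
    have : δ / (‖v‖ + 1) * ⟪u, v⟫ < 0 := mul_neg_of_pos_of_neg (by positivity) hneg
    linarith

theorem zero_mem_convexHull_activeNormals [FiniteDimensional ℝ E] (hh : Continuous h)
    (hx : x ∈ intrinsicInterior ℝ (wulffShape h))
    (hdim : (affineSpan ℝ (wulffShape h)).direction ≠ ⊤) :
    (0 : E) ∈ convexHull ℝ (activeNormals h x) := by
  set D := (affineSpan ℝ (wulffShape h)).direction
  have hxC := intrinsicInterior_subset hx
  have hND : activeNormals h x ⊆ Dᗮ := fun u hu =>
    mem_orthogonal_direction_of_forall_inner_le hx fun y hy => hu.2 ▸ hy u hu.1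
  by_contra h0
  obtain ⟨v, hvD, hv0, hvN⟩ := exists_mem_ne_zero_forall_inner_neg
    (mt Submodule.orthogonal_eq_bot_iff.1 hdim) hND (isCompact_activeNormals hh x) h0
  obtain ⟨ε, hε, hmem⟩ := exists_pos_add_smul_mem_wulffShape hh hxC hvN
  have hεv : ε • v ∈ D := by
    simpa [D, direction_affineSpan] using vsub_mem_vectorSpan ℝ hmem hxC
  have := Submodule.inner_right_of_mem_orthogonal hεv (Submodule.smul_mem _ ε hvD)
  simp [hε.ne', hv0] at this

end InnerProductSpace

theorem ceil_div_add_one_pos {n : ℕ} (hn : 0 < n) (m : ℕ) : 0 < ⌈(n : ℚ) / (m + 1)⌉₊ :=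
  Nat.ceil_pos.2 (by positivity)

theorem ceil_div_add_one_le (n m : ℕ) : ⌈(n : ℚ) / (m + 1)⌉₊ ≤ n :=
  Nat.ceil_le.2 (div_le_self (by positivity) (by simp))

section Centerpoint

variable {d : ℕ}

theorem isConvexPolyhedron_iInter_inner_le {ι : Type*} [Fintype ι]
    {z : ι → EuclideanSpace ℝ (Fin d)} (hz : ∀ i, z i ≠ 0) (b : ι → ℝ) :
    IsConvexPolyhedron (⋂ i, {x | ⟪z i, x⟫ ≤ b i}) := by
  let e := Fintype.equivFin ι
  refine ⟨Fintype.card ι, fun j => -innerₗ _ (z (e.symm j)), fun j => -b (e.symm j),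
    fun j h0 => hz (e.symm j) ?_, ?_⟩
  · simpa using LinearMap.congr_fun h0 (z (e.symm j))
  · rw [← e.symm.surjective.iInter_comp]
    simp

theorem setDim_mk' (x : EuclideanSpace ℝ (Fin d)) (U : Submodule ℝ (EuclideanSpace ℝ (Fin d))) :
    setDim (AffineSubspace.mk' x U : Set (EuclideanSpace ℝ (Fin d))) = Module.finrank ℝ U := by
  rw [setDim, AffineSubspace.affineSpan_coe, AffineSubspace.direction_mk']

theorem isCenterpoint_iff_mem_wulffShape {P : Finset (EuclideanSpace ℝ (Fin d))} (hP : P.Nonempty)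
    {c : EuclideanSpace ℝ (Fin d)} :
    IsCenterpoint P c ↔ c ∈ wulffShape fun u => kthLargest P ⌈(#P : ℚ) / (d + 1)⌉₊ (⟪u, ·⟫) := by
  have hα := ceil_div_add_one_pos hP.card_pos d
  have hαP := ceil_div_add_one_le #P d
  constructor
  · intro hc u hu
    have hu0 : innerₗ _ u ≠ 0 := fun h0 => by simpa [hu] using LinearMap.congr_fun h0 u
    exact (le_kthLargest_iff hα hαP).2 (hc (innerₗ _ u) _ hu0 le_rfl)
  · intro hc f a hf ha
    set w := (InnerProductSpace.toDual ℝ _).symm (LinearMap.toContinuousLinearMap f)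
    have hw : ∀ x, ⟪w, x⟫ = f x := fun x => InnerProductSpace.toDual_symm_apply
    have hw0 : 0 < ‖w‖ := norm_pos_iff.2 fun h0 => hf (LinearMap.ext fun x => by simp [← hw, h0])
    refine ((le_kthLargest_iff hα hαP).1 (hc (‖w‖⁻¹ • w) ?_)).trans
      (card_le_card (monotone_filter_right P fun q _ hq => ?_))
    · simp [norm_smul, hw0.ne']
    · rw [real_inner_smul_left, real_inner_smul_left, hw, hw,
        mul_le_mul_iff_right₀ (inv_pos.2 hw0)] at hq
      exact ha.trans hq

theorem exists_polyhedron_of_zero_mem_convexHull_activeNormals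
    {P : Finset (EuclideanSpace ℝ (Fin d))} {k : ℕ} (hk : 0 < k) {x : EuclideanSpace ℝ (Fin d)}
    (h0 : 0 ∈ convexHull ℝ (activeNormals (fun u => kthLargest P k (⟪u, ·⟫)) x)) :
    ∃ s : ℕ, 1 ≤ s ∧ s ≤ d ∧
      ∃ I : Set (EuclideanSpace ℝ (Fin d)), IsConvexPolyhedron I ∧ setDim I = d - s ∧
        wulffShape (fun u => kthLargest P k (⟪u, ·⟫)) ⊆ I ∧
        (#P : ℤ) - (s + 1) * ((k : ℤ) - 1) ≤ ((P : Set (EuclideanSpace ℝ (Fin d))) ∩ I).ncard := by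
  obtain ⟨ι, _, z, w, hzN, hind, hw, hw1, hsum⟩ := eq_pos_convex_span_of_mem_convexHull h0
  have hunit (i : ι) : ‖z i‖ = 1 := (hzN ⟨i, rfl⟩).1
  have hactive (i : ι) : ⟪z i, x⟫ = kthLargest P k (⟪z i, ·⟫) := (hzN ⟨i, rfl⟩).2
  have hz0 (i : ι) : z i ≠ 0 := fun h => by simpa [h] using hunit i
  set U := Submodule.span ℝ (Set.range z)
  set I := ⋂ i, {y | ⟪z i, y⟫ ≤ ⟪z i, x⟫}
  have hs : 1 ≤ Module.finrank ℝ U := by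
    obtain ⟨i⟩ : Nonempty ι := by
      by_contra hι
      simp [not_nonempty_iff.1 hι] at hw1
    have hzU : z i ∈ U := Submodule.subset_span (Set.mem_range_self i)
    exact Submodule.one_le_finrank_iff.2 fun hU => hz0 i (by rwa [hU, Submodule.mem_bot] at hzU)
  have hsd : Module.finrank ℝ U ≤ d := U.finrank_le.trans_eq (finrank_euclideanSpace_fin)
  refine ⟨_, hs, hsd, I, isConvexPolyhedron_iInter_inner_le hz0 _, ?_, ?_, ?_⟩
  · rw [show I = AffineSubspace.mk' x Uᗮ from iInter_inner_le_eq_mk' hw hsum x, setDim_mk']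
    have := U.finrank_add_finrank_orthogonal
    rw [finrank_euclideanSpace_fin] at this
    omega
  · exact fun c hc => Set.mem_iInter.2 fun i => hactive i ▸ hc (z i) (hunit i)
  · have hcount := card_le_card_filter_forall_le_kthLargest_add (P := P) (fun i q => ⟪z i, q⟫) hk
    have hI : (P : Set (EuclideanSpace ℝ (Fin d))) ∩ I =
        ↑{q ∈ P | ∀ i, ⟪z i, q⟫ ≤ kthLargest P k (⟪z i, ·⟫)} := by
      ext q
      simp [I, hactive]
    have hcard := Nat.mul_le_mul_right (k - 1) hind.card_le_finrank_span_add_one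
    rw [hI, Set.ncard_coe_finset]
    zify [hk] at hcount hcard
    linarith

end Centerpoint

/-- the center of `n ≥ d + 1` points in `ℝ^d` is either `d`-dimensional,
or it is contained in a `(d - s)`-dimensional convex polyhedron containing at least
`n - (s+1)(α - 1)` points of `P`, where `α = ⌈n/(d+1)⌉`, for some `1 ≤ s ≤ d`. -/
theorem center_dim_or_small_polyhedron
    (d : ℕ) (P : Finset (EuclideanSpace ℝ (Fin d))) (n : ℕ) (hn : P.card = n)
    (hnd : d + 1 ≤ n) (α : ℕ) (hα : α = ⌈(n : ℚ) / (d + 1)⌉₊)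
    (C : Set (EuclideanSpace ℝ (Fin d))) (hC : C = {c | IsCenterpoint P c})
    (hCne : C.Nonempty) :
    setDim C = d ∨
    ∃ s : ℕ, 1 ≤ s ∧ s ≤ d ∧
      ∃ I : Set (EuclideanSpace ℝ (Fin d)), IsConvexPolyhedron I ∧
        setDim I = d - s ∧ C ⊆ I ∧
        (n : ℤ) - (s + 1) * ((α : ℤ) - 1) ≤ ((P : Set (EuclideanSpace ℝ (Fin d))) ∩ I).ncard := by
  subst hn hC
  have hP : P.Nonempty := card_pos.1 (by omega)
  have hαpos : 0 < α := hα ▸ ceil_div_add_one_pos hP.card_pos d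
  have hαP : α ≤ #P := hα ▸ ceil_div_add_one_le #P d
  set h := fun u => kthLargest P α (⟪u, ·⟫)
  have hC : {c | IsCenterpoint P c} = wulffShape h := by
    ext c
    rw [Set.mem_ofPred_eq, isCenterpoint_iff_mem_wulffShape hP, ← hα]
  rw [hC] at hCne ⊢
  refine or_iff_not_imp_left.2 fun hdim => ?_
  have htop : (affineSpan ℝ (wulffShape h)).direction ≠ ⊤ := fun htop => by
    rw [setDim, htop, finrank_top, finrank_euclideanSpace_fin] at hdim
    exact hdim rfl
  obtain ⟨x, hx⟩ := hCne.intrinsicInterior (convex_wulffShape h)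
  exact exists_polyhedron_of_zero_mem_convexHull_activeNormals hαpos
    (zero_mem_convexHull_activeNormals (continuous_kthLargest_inner hαpos hαP) hx htop)
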